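/- Let X ∈ A have social cost at most D·min_{Z∈A} SC(Z) under pseudometric d consistent with profile σ, and let w be an X-truncated weight function with w⁺(Y)=Σ_i w(i,Y). Then for any probability distribution p over A, the distortion of p satisfies (Σ_Y p(Y)·SC(Y)) / min_Z SC(Z) ≤ D · (1 + 2n · (Σ_Y p(Y)·d(X,Y)) / (Σ_Y w⁺(Y)·d(X,Y))), assuming Σ_Y w⁺(Y)·d(X,Y) > 0. -/

import Mathlib

/-!
Every agent `i` weights only alternatives `Y` it ranks at least as high as `X`; by consistency
`d(i,Y) ≤ d(i,X)`, so `d(X,Y) ≤ 2 d(i,X)`, and summing gives `Σ_Y w⁺(Y) d(X,Y) ≤ 2 SC(X) ≤ 2D·SC(Z)`.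
On the other hand the triangle inequality through `X` gives `SC(Y) ≤ SC(X) + n d(X,Y)`, hence
`Σ_Y p(Y) SC(Y) ≤ D·SC(Z) + n Σ_Y p(Y) d(X,Y)`, and the first bound converts the last term.
-/

open Finset

namespace Distortion

variable {N A : Type*}

def socialCost [Fintype N] (d : N ⊕ A → N ⊕ A → ℝ) (Y : A) : ℝ :=
  ∑ i, d (.inl i) (.inr Y)

section Pseudometric

variable {d : N ⊕ A → N ⊕ A → ℝ}

theorem socialCost_le_add [Fintype N] (htri : ∀ a b c, d a c ≤ d a b + d b c) (X Y : A) :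
    socialCost d Y ≤ socialCost d X + Fintype.card N * d (.inr X) (.inr Y) := by
  calc socialCost d Y ≤ ∑ i : N, (d (.inl i) (.inr X) + d (.inr X) (.inr Y)) :=
        sum_le_sum fun i _ => htri _ _ _
    _ = socialCost d X + Fintype.card N * d (.inr X) (.inr Y) := by
        rw [sum_add_distrib, sum_const, nsmul_eq_mul, card_univ]; rfl

theorem sum_mul_socialCost_le [Fintype N] [Fintype A] (htri : ∀ a b c, d a c ≤ d a b + d b c)
    (X : A) {p : A → ℝ}
    (hp : ∀ Y, 0 ≤ p Y) (hpsum : ∑ Y, p Y = 1) :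
    ∑ Y, p Y * socialCost d Y ≤
      socialCost d X + Fintype.card N * ∑ Y, p Y * d (.inr X) (.inr Y) := by
  calc ∑ Y, p Y * socialCost d Y
      ≤ ∑ Y, p Y * (socialCost d X + Fintype.card N * d (.inr X) (.inr Y)) :=
        sum_le_sum fun Y _ => mul_le_mul_of_nonneg_left (socialCost_le_add htri X Y) (hp Y)
    _ = socialCost d X + Fintype.card N * ∑ Y, p Y * d (.inr X) (.inr Y) := by
        simp only [mul_add, sum_add_distrib, ← sum_mul, hpsum, one_mul, mul_sum]
        congr 1
        exact sum_congr rfl fun Y _ => mul_left_comm _ _ _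

variable {rk : N → A → ℕ}

theorem dist_le_two_mul_of_rank_le (hinj : ∀ i, Function.Injective (rk i))
    (hsym : ∀ a b, d a b = d b a) (htri : ∀ a b c, d a c ≤ d a b + d b c)
    (hcons : ∀ i Y Z, rk i Y < rk i Z → d (.inl i) (.inr Y) ≤ d (.inl i) (.inr Z))
    {i : N} {X Y : A} (hY : rk i Y ≤ rk i X) :
    d (.inr X) (.inr Y) ≤ 2 * d (.inl i) (.inr X) := by
  have hiY : d (.inl i) (.inr Y) ≤ d (.inl i) (.inr X) := by
    rcases hY.eq_or_lt with h | h
    · rw [hinj i h]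
    · exact hcons i Y X h
  calc d (.inr X) (.inr Y) ≤ d (.inr X) (.inl i) + d (.inl i) (.inr Y) := htri _ _ _
    _ ≤ 2 * d (.inl i) (.inr X) := by rw [hsym]; linarith

theorem sum_weight_mul_dist_le [Fintype N] [Fintype A] (hinj : ∀ i, Function.Injective (rk i))
    (hsym : ∀ a b, d a b = d b a) (htri : ∀ a b c, d a c ≤ d a b + d b c)
    (hcons : ∀ i Y Z, rk i Y < rk i Z → d (.inl i) (.inr Y) ≤ d (.inl i) (.inr Z))
    {X : A} {w : N → A → ℝ} (hw_nonneg : ∀ i Y, 0 ≤ w i Y)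
    (hw0 : ∀ i Y, rk i X < rk i Y → w i Y = 0)
    (hw1 : ∀ i, ∑ Y ∈ univ.filter (fun Y : A => rk i Y ≤ rk i X), w i Y = 1) :
    ∑ Y, (∑ i, w i Y) * d (.inr X) (.inr Y) ≤ 2 * socialCost d X := by
  have hagent : ∀ i, ∑ Y, w i Y * d (.inr X) (.inr Y) ≤ 2 * d (.inl i) (.inr X) := fun i =>
    calc ∑ Y, w i Y * d (.inr X) (.inr Y)
        = ∑ Y ∈ univ.filter (fun Y : A => rk i Y ≤ rk i X), w i Y * d (.inr X) (.inr Y) := by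
          refine (sum_filter_of_ne fun Y _ hY => ?_).symm
          by_contra h
          exact hY (by rw [hw0 i Y (not_le.mp h), zero_mul])
      _ ≤ ∑ Y ∈ univ.filter (fun Y : A => rk i Y ≤ rk i X),
            w i Y * (2 * d (.inl i) (.inr X)) :=
          sum_le_sum fun Y hY => mul_le_mul_of_nonneg_left
            (dist_le_two_mul_of_rank_le hinj hsym htri hcons (mem_filter.mp hY).2)
            (hw_nonneg i Y)
      _ = 2 * d (.inl i) (.inr X) := by rw [← sum_mul, hw1 i, one_mul]
  calc ∑ Y, (∑ i, w i Y) * d (.inr X) (.inr Y)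
      = ∑ i, ∑ Y, w i Y * d (.inr X) (.inr Y) := by
        simp only [sum_mul]; exact sum_comm
    _ ≤ 2 * socialCost d X := by
        rw [socialCost, mul_sum]; exact sum_le_sum fun i _ => hagent i

end Pseudometric

theorem le_mul_one_add_div_mul {cost c z m P W D : ℝ} (hcost : cost ≤ c + m * P)
    (hc : c ≤ D * z) (hW : W ≤ 2 * (D * z)) (hWpos : 0 < W) (hmP : 0 ≤ m * P) :
    cost ≤ D * (1 + 2 * m * P / W) * z := by
  have hmPW : m * P * W ≤ m * P * (2 * (D * z)) := mul_le_mul_of_nonneg_left hW hmP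
  have : m * P ≤ 2 * D * m * P * z / W := by
    rw [le_div_iff₀ hWpos]; linarith
  calc cost ≤ D * z + 2 * D * m * P * z / W := by linarith
    _ = D * (1 + 2 * m * P / W) * z := by field_simp

end Distortion

open Distortion in
theorem stmt_7_general {N A : Type*} [Fintype N] [Fintype A]
    (rk : N → A → ℕ) (hinj : ∀ i, Function.Injective (rk i))
    (d : (N ⊕ A) → (N ⊕ A) → ℝ)
    (hnn : ∀ a b, 0 ≤ d a b)
    (hsym : ∀ a b, d a b = d b a)
    (htri : ∀ a b c, d a c ≤ d a b + d b c)
    (hcons : ∀ i Y Z, rk i Y < rk i Z →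
      d (Sum.inl i) (Sum.inr Y) ≤ d (Sum.inl i) (Sum.inr Z))
    (X : A) (D : ℝ)
    (hD : ∀ Z : A, ∑ i : N, d (Sum.inl i) (Sum.inr X) ≤
      D * ∑ i : N, d (Sum.inl i) (Sum.inr Z))
    (w : N → A → ℝ)
    (hw01 : ∀ i Y, w i Y ∈ Set.Icc (0 : ℝ) 1)
    (hw0 : ∀ i Y, rk i X < rk i Y → w i Y = 0)
    (hw1 : ∀ i, ∑ Y ∈ Finset.univ.filter (fun Y : A => rk i Y ≤ rk i X), w i Y = 1)
    (p : A → ℝ) (hp : ∀ Y, 0 ≤ p Y) (hpsum : ∑ Y : A, p Y = 1)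
    (hpos : 0 < ∑ Y : A, (∑ i : N, w i Y) * d (Sum.inr X) (Sum.inr Y)) :
    ∀ Z : A,
      ∑ Y : A, p Y * ∑ i : N, d (Sum.inl i) (Sum.inr Y) ≤
        D * (1 + 2 * (Fintype.card N : ℝ) *
            (∑ Y : A, p Y * d (Sum.inr X) (Sum.inr Y)) /
            (∑ Y : A, (∑ i : N, w i Y) * d (Sum.inr X) (Sum.inr Y))) *
          ∑ i : N, d (Sum.inl i) (Sum.inr Z) := by
  intro Z
  have hweighted : ∑ Y, (∑ i, w i Y) * d (.inr X) (.inr Y) ≤ 2 * socialCost d X :=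
    sum_weight_mul_dist_le hinj hsym htri hcons (fun i Y => (hw01 i Y).1) hw0 hw1
  have hexpected := sum_mul_socialCost_le htri X hp hpsum
  have hnP : 0 ≤ (Fintype.card N : ℝ) * ∑ Y, p Y * d (.inr X) (.inr Y) :=
    mul_nonneg (Nat.cast_nonneg _) (sum_nonneg fun Y _ => mul_nonneg (hp Y) (hnn _ _))
  exact le_mul_one_add_div_mul hexpected (hD Z) 
    (hweighted.trans (mul_le_mul_of_nonneg_left (hD Z) zero_le_two)) hpos hnP

/-- If `SC(X) ≤ D · min_Z SC(Z)` and `w` is an `X`-truncated weight function,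
then any distribution `p` over alternatives has metric distortion at most
`D·(1 + 2n·(Σ_Y p(Y)d(X,Y))/(Σ_Y w⁺(Y)d(X,Y)))`. -/
theorem stmt_7 {N A : Type*} [Fintype N] [Fintype A] [DecidableEq A]
    (rk : N → A → ℕ) (hinj : ∀ i, Function.Injective (rk i))
    (d : (N ⊕ A) → (N ⊕ A) → ℝ)
    (hnn : ∀ a b, 0 ≤ d a b)
    (hself : ∀ a, d a a = 0)
    (hsym : ∀ a b, d a b = d b a)
    (htri : ∀ a b c, d a c ≤ d a b + d b c)
    (hcons : ∀ i Y Z, rk i Y < rk i Z →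
      d (Sum.inl i) (Sum.inr Y) ≤ d (Sum.inl i) (Sum.inr Z))
    (X : A) (D : ℝ) (hD1 : 1 ≤ D)
    (hD : ∀ Z : A, ∑ i : N, d (Sum.inl i) (Sum.inr X) ≤
      D * ∑ i : N, d (Sum.inl i) (Sum.inr Z))
    (w : N → A → ℝ)
    (hw01 : ∀ i Y, w i Y ∈ Set.Icc (0 : ℝ) 1)
    (hw0 : ∀ i Y, rk i X < rk i Y → w i Y = 0)
    (hw1 : ∀ i, ∑ Y ∈ Finset.univ.filter (fun Y : A => rk i Y ≤ rk i X), w i Y = 1)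
    (p : A → ℝ) (hp : ∀ Y, 0 ≤ p Y) (hpsum : ∑ Y : A, p Y = 1)
    (hpos : 0 < ∑ Y : A, (∑ i : N, w i Y) * d (Sum.inr X) (Sum.inr Y)) :
    ∀ Z : A,
      ∑ Y : A, p Y * ∑ i : N, d (Sum.inl i) (Sum.inr Y) ≤
        D * (1 + 2 * (Fintype.card N : ℝ) *
            (∑ Y : A, p Y * d (Sum.inr X) (Sum.inr Y)) /
            (∑ Y : A, (∑ i : N, w i Y) * d (Sum.inr X) (Sum.inr Y))) *
          ∑ i : N, d (Sum.inl i) (Sum.inr Z) :=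
  stmt_7_general rk hinj d hnn hsym htri hcons X D hD w hw01 hw0 hw1 p hp hpsum hpos
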